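/- arXiv:2210.12160 — 5 statements merged into one kernel-verified Lean document; each statement's English description precedes it below -/
import Mathlib

section
/- Regularized performance difference lemma: For a finite discounted MDP with regularizer Ω, and any two policies π, π', the following identity holds: (1−γ)·E_{s∼ρ}[V_Ω^π(s) − V_Ω^{π'}(s)] = E_{s∼μ^π}[ ∑_a π(s,a)·Q_Ω^{π'}(s,a) − V_Ω^{π'}(s) − Ω(π(s,·)) ]. -/
/-- Regularized performance difference lemma: for any two policies `π`, `π'`,
`(1−γ)·E_{s∼ρ}[V_Ω^π(s) − V_Ω^{π'}(s)]
  = E_{s∼μ^π}[∑_a π(s,a)Q_Ω^{π'}(s,a) − V_Ω^{π'}(s) − Ω(π(s,·))]`. -/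
theorem regularized_performance_difference
    {S A : Type*} [Fintype S] [Fintype A]
    (P : S → A → S → ℝ) (hP0 : ∀ s a s', 0 ≤ P s a s') (hP1 : ∀ s a, ∑ s', P s a s' = 1)
    (r : S → A → ℝ) (ρ : S → ℝ) (hρ : ρ ∈ stdSimplex ℝ S)
    (γ : ℝ) (hγ0 : 0 ≤ γ) (hγ1 : γ < 1)
    (Ω : (A → ℝ) → ℝ)
    (π π' : S → A → ℝ)
    (hπ : ∀ s, π s ∈ stdSimplex ℝ A) (hπ' : ∀ s, π' s ∈ stdSimplex ℝ A)
    (Q V : S → A → ℝ) (Vπ Vπ' : S → ℝ) (Qπ Qπ' : S → A → ℝ)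
    (hQπ : ∀ s a, Qπ s a = r s a + γ * ∑ s', P s a s' * Vπ s')
    (hVπ : ∀ s, Vπ s = ∑ a, π s a * Qπ s a - Ω (π s))
    (hQπ' : ∀ s a, Qπ' s a = r s a + γ * ∑ s', P s a s' * Vπ' s')
    (hVπ' : ∀ s, Vπ' s = ∑ a, π' s a * Qπ' s a - Ω (π' s))
    (μ : S → ℝ)
    (hμ : ∀ s', μ s' = (1 - γ) * ρ s' + γ * ∑ s, (∑ a, P s a s' * π s a) * μ s) :
    (1 - γ) * ∑ s, ρ s * (Vπ s - Vπ' s)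
      = ∑ s, μ s * ((∑ a, π s a * Qπ' s a) - Vπ' s - Ω (π s)) := by
  set f : S → ℝ := fun s => Vπ s - Vπ' s with hf
  -- Q difference
  have hQdiff : ∀ s a, Qπ s a = Qπ' s a + γ * ∑ s', P s a s' * f s' := by
    intro s a
    rw [hQπ, hQπ']
    have : ∑ s', P s a s' * f s'
        = ∑ s', P s a s' * Vπ s' - ∑ s', P s a s' * Vπ' s' := by
      rw [← Finset.sum_sub_distrib]
      exact Finset.sum_congr rfl fun s' _ => by simp [hf, mul_sub]
    rw [this]; ring
  -- pointwise identity
  have key : ∀ s, (∑ a, π s a * Qπ' s a) - Vπ' s - Ω (π s)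
      = f s - γ * ∑ a, π s a * ∑ s', P s a s' * f s' := by
    intro s
    have h1 : ∑ a, π s a * Qπ s a
        = (∑ a, π s a * Qπ' s a) + γ * ∑ a, π s a * ∑ s', P s a s' * f s' := by
      rw [Finset.mul_sum, ← Finset.sum_add_distrib]
      exact Finset.sum_congr rfl fun a _ => by rw [hQdiff]; ring
    have h2 : f s = Vπ s - Vπ' s := rfl
    rw [h2, hVπ s, h1]; ring
  -- sum against μ
  calc (1 - γ) * ∑ s, ρ s * f s
      = ∑ s, μ s * f s - γ * ∑ s, μ s * ∑ a, π s a * ∑ s', P s a s' * f s' := by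
        have hμf : ∑ s', μ s' * f s'
            = (1 - γ) * ∑ s', ρ s' * f s'
              + γ * ∑ s', (∑ s, (∑ a, P s a s' * π s a) * μ s) * f s' := by
          rw [Finset.mul_sum, Finset.mul_sum, ← Finset.sum_add_distrib]
          exact Finset.sum_congr rfl fun s' _ => by rw [hμ s']; ring
        have hswap : ∑ s', (∑ s, (∑ a, P s a s' * π s a) * μ s) * f s'
            = ∑ s, μ s * ∑ a, π s a * ∑ s', P s a s' * f s' := by
          simp only [Finset.sum_mul, Finset.mul_sum]
          rw [Finset.sum_comm]
          refine Finset.sum_congr rfl fun s _ => ?_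
          rw [Finset.sum_comm]
          exact Finset.sum_congr rfl fun a _ => Finset.sum_congr rfl fun s' _ => by ring
        rw [hswap] at hμf
        linarith [hμf]
    _ = ∑ s, μ s * ((∑ a, π s a * Qπ' s a) - Vπ' s - Ω (π s)) := by
        rw [Finset.mul_sum, ← Finset.sum_sub_distrib]
        exact Finset.sum_congr rfl fun s _ => by rw [key s]; ring
end

section
/- Main inequality: For a finite regularized MDP with continuously differentiable strictly convex regularizer Ω and optimal regularized policy π*_Ω (the per-state maximizer defining V_Ω^⋆), for any policy π: E_{s∼μ^π}[ D_Ω(π(s,·), π*_Ω(s,·)) ] ≤ (1−γ)·E_{s∼ρ}[ V_Ω^⋆(s) − V_Ω^π(s) ]. -/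
/-!
By first-order optimality of `π⋆ s` for `p ↦ ⟪p, Q⋆ s⟫ - Ω p` on the simplex, the Bregman
divergence `D_Ω(π s, π⋆ s)` is at most the one-step gap `g s = V⋆ s - (⟪π s, Q⋆ s⟫ - Ω (π s))`.
The Bellman equations give `V⋆ - Vπ = g + γ Pπ (V⋆ - Vπ)`, and pairing this with the
fixed-point equation `μ = (1 - γ) ρ + γ Pπᵀ μ` turns `⟪μ, g⟫` into `(1 - γ) ⟪ρ, V⋆ - Vπ⟫`.
Since `μ ≥ 0`, summing the per-state bounds against `μ` concludes.
-/

theorem bregman_le_sub_of_isMaxOn {E : Type*} [NormedAddCommGroup E] [NormedSpace ℝ E]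
    {s : Set E} (hs : Convex ℝ s) (ℓ : E →L[ℝ] ℝ) {Ω : E → ℝ} {p q : E}
    (hΩ : DifferentiableAt ℝ Ω q) (hmax : IsMaxOn (fun x => ℓ x - Ω x) s q)
    (hq : q ∈ s) (hp : p ∈ s) :
    Ω p - Ω q - fderiv ℝ Ω q (p - q) ≤ (ℓ q - Ω q) - (ℓ p - Ω p) := by
  have hfoc : ℓ (p - q) - fderiv ℝ Ω q (p - q) ≤ 0 :=
    hmax.localize.hasFDerivWithinAt_nonpos (ℓ.hasFDerivAt.sub hΩ.hasFDerivAt).hasFDerivWithinAt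
      (sub_mem_posTangentConeAt_of_segment_subset (hs.segment_subset hq hp))
  rw [map_sub] at hfoc
  linarith

section DiscountedFixedPoint

open Finset Matrix

variable {S : Type*} [Fintype S]

theorem nonneg_of_eq_add_smul_vecMul {M : Matrix S S ℝ} (hM0 : ∀ i j, 0 ≤ M i j)
    (hM1 : ∀ i, ∑ j, M i j ≤ 1) {γ : ℝ} (hγ0 : 0 ≤ γ) (hγ1 : γ < 1) {b μ : S → ℝ}
    (hb : 0 ≤ b) (hμ : μ = b + γ • μ ᵥ* M) : 0 ≤ μ := by
  -- summing `μ⁻ ≤ γ • μ⁻ ᵥ* M` over the states forces `∑ μ⁻ ≤ γ ∑ μ⁻`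
  set ν : S → ℝ := fun i => (μ i)⁻
  have hν0 : ∀ i, 0 ≤ ν i := fun i => negPart_nonneg _
  have hν : ∀ j, ν j ≤ γ * ∑ i, ν i * M i j := by
    intro j
    have hrhs : 0 ≤ γ * ∑ i, ν i * M i j :=
      mul_nonneg hγ0 (sum_nonneg fun i _ => mul_nonneg (hν0 i) (hM0 i j))
    refine sup_le ?_ hrhs
    have hμj : μ j = b j + γ * ∑ i, μ i * M i j := congrFun hμ j
    have : ∑ i, -μ i * M i j ≤ ∑ i, ν i * M i j :=
      sum_le_sum fun i _ => mul_le_mul_of_nonneg_right (neg_le_negPart _) (hM0 i j)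
    simp only [neg_mul, sum_neg_distrib] at this
    have hbj : 0 ≤ b j := hb j
    linarith [mul_le_mul_of_nonneg_left this hγ0]
  have hsum : ∑ j, ν j ≤ γ * ∑ i, ν i :=
    calc ∑ j, ν j ≤ ∑ j, γ * ∑ i, ν i * M i j := sum_le_sum fun j _ => hν j
      _ = γ * ∑ i, ν i * ∑ j, M i j := by rw [← mul_sum, sum_comm]; simp only [mul_sum]
      _ ≤ γ * ∑ i, ν i := by
        gcongr with i
        exact mul_le_of_le_one_right (hν0 i) (hM1 i)
  have hzero : ∑ i, ν i = 0 := by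
    nlinarith [sum_nonneg fun i (_ : i ∈ univ) => hν0 i]
  intro i
  exact negPart_eq_zero.1 ((sum_eq_zero_iff_of_nonneg fun i _ => hν0 i).1 hzero i (mem_univ i))

theorem dotProduct_eq_of_discounted_fixedPoints {M : Matrix S S ℝ} {γ : ℝ} {ρ μ g δ : S → ℝ}
    (hμ : μ = (1 - γ) • ρ + γ • μ ᵥ* M) (hδ : δ = g + γ • M *ᵥ δ) :
    μ ⬝ᵥ g = (1 - γ) * (ρ ⬝ᵥ δ) := by
  have hg : g = δ - γ • M *ᵥ δ := eq_sub_of_add_eq hδ.symm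
  have hμM : γ • μ ᵥ* M = μ - (1 - γ) • ρ := eq_sub_of_add_eq' hμ.symm
  rw [hg, dotProduct_sub, dotProduct_smul, dotProduct_mulVec, ← smul_dotProduct, hμM,
    sub_dotProduct, smul_dotProduct, smul_eq_mul]
  ring

end DiscountedFixedPoint

section PolicyKernel

open Finset Matrix

variable {S A : Type*} [Fintype A]

/-- The transition matrix `Pπ` of the state chain induced by `π`. -/
def policyKernel (P : S → A → S → ℝ) (π : S → A → ℝ) : Matrix S S ℝ :=
  Matrix.of fun s s' => ∑ a, P s a s' * π s a

variable {P : S → A → S → ℝ} {π : S → A → ℝ}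

@[simp]
theorem policyKernel_apply (s s' : S) : policyKernel P π s s' = ∑ a, P s a s' * π s a := rfl

theorem policyKernel_nonneg (hP : ∀ s a s', 0 ≤ P s a s') (hπ : ∀ s a, 0 ≤ π s a) (s s' : S) :
    0 ≤ policyKernel P π s s' :=
  sum_nonneg fun a _ => mul_nonneg (hP s a s') (hπ s a)

theorem sum_policyKernel [Fintype S] (hP : ∀ s a, ∑ s', P s a s' = 1)
    (hπ : ∀ s, ∑ a, π s a = 1) (s : S) : ∑ s', policyKernel P π s s' = 1 := by
  simp only [policyKernel_apply]
  rw [sum_comm]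
  simp_rw [← sum_mul, hP, one_mul, hπ]

theorem sum_mul_sub_sum_mul_of_bellman [Fintype S] {r : S → A → ℝ} {γ : ℝ}
    {Q Q' : S → A → ℝ} {V V' : S → ℝ}
    (hQ : ∀ s a, Q s a = r s a + γ * ∑ s', P s a s' * V s')
    (hQ' : ∀ s a, Q' s a = r s a + γ * ∑ s', P s a s' * V' s') (s : S) :
    ∑ a, π s a * Q s a - ∑ a, π s a * Q' s a = γ * (policyKernel P π *ᵥ (V - V')) s := by
  simp only [mulVec, dotProduct, policyKernel_apply, Pi.sub_apply, hQ, hQ', sum_mul, mul_sum,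
    ← sum_sub_distrib]
  rw [sum_comm]
  refine sum_congr rfl fun a _ => ?_
  rw [← mul_sub, add_sub_add_left_eq_sub, ← sum_sub_distrib, mul_sum]
  refine sum_congr rfl fun s' _ => ?_
  ring

end PolicyKernel

theorem regularized_mdp_main_inequality_general
    {S A : Type*} [Fintype S] [Fintype A]
    (P : S → A → S → ℝ) (hP0 : ∀ s a s', 0 ≤ P s a s') (hP1 : ∀ s a, ∑ s', P s a s' = 1)
    (r : S → A → ℝ) (ρ : S → ℝ) (hρ : ρ ∈ stdSimplex ℝ S)
    (γ : ℝ) (hγ0 : 0 ≤ γ) (hγ1 : γ < 1)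
    (Ω : (A → ℝ) → ℝ) (hΩdiff : ContDiff ℝ 1 Ω)
    -- optimal regularized value functions and optimal policy
    (Qstar : S → A → ℝ) (Vstar : S → ℝ) (πstar : S → A → ℝ)
    (hπstar : ∀ s, πstar s ∈ stdSimplex ℝ A)
    (hQstar : ∀ s a, Qstar s a = r s a + γ * ∑ s', P s a s' * Vstar s')
    (hVstar : ∀ s, Vstar s = ∑ a, πstar s a * Qstar s a - Ω (πstar s))
    (hmax : ∀ s, ∀ p ∈ stdSimplex ℝ A,
      ∑ a, p a * Qstar s a - Ω p ≤ ∑ a, πstar s a * Qstar s a - Ω (πstar s))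
    -- an arbitrary policy `π` with its regularized value functions
    (π : S → A → ℝ) (hπ : ∀ s, π s ∈ stdSimplex ℝ A)
    (Qπ : S → A → ℝ) (Vπ : S → ℝ)
    (hQπ : ∀ s a, Qπ s a = r s a + γ * ∑ s', P s a s' * Vπ s')
    (hVπ : ∀ s, Vπ s = ∑ a, π s a * Qπ s a - Ω (π s))
    -- discounted stationary distribution of `π`
    (μ : S → ℝ)
    (hμ : ∀ s', μ s' = (1 - γ) * ρ s' + γ * ∑ s, (∑ a, P s a s' * π s a) * μ s) :
    ∑ s, μ s * (Ω (π s) - Ω (πstar s) - fderiv ℝ Ω (πstar s) (π s - πstar s))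
      ≤ (1 - γ) * ∑ s, ρ s * (Vstar s - Vπ s) := by
  set M := policyKernel P π
  set gap : S → ℝ := fun s => Vstar s - (∑ a, π s a * Qstar s a - Ω (π s))
  have hμ_fix : μ = (1 - γ) • ρ + γ • Matrix.vecMul μ M := by
    ext s'
    simp [hμ s', M, Matrix.vecMul, dotProduct, mul_comm]
  have hμ_nonneg : 0 ≤ μ :=
    nonneg_of_eq_add_smul_vecMul (policyKernel_nonneg hP0 fun s => (hπ s).1)
      (fun s => (sum_policyKernel hP1 (fun s => (hπ s).2) s).le) hγ0 hγ1
      (smul_nonneg (sub_nonneg.2 hγ1.le) hρ.1) hμ_fix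
  have hδ_fix : Vstar - Vπ = gap + γ • M.mulVec (Vstar - Vπ) := by
    ext s
    have := sum_mul_sub_sum_mul_of_bellman (π := π) hQstar hQπ s
    simp only [Pi.add_apply, Pi.sub_apply, Pi.smul_apply, smul_eq_mul, gap, hVπ s]
    linarith
  have hD_le_gap :
      ∀ s, Ω (π s) - Ω (πstar s) - fderiv ℝ Ω (πstar s) (π s - πstar s) ≤ gap s := by
    intro s
    let ℓ : (A → ℝ) →L[ℝ] ℝ := ∑ a, Qstar s a • ContinuousLinearMap.proj a
    have hℓ : ∀ p, ℓ p = ∑ a, p a * Qstar s a := fun p => by simp [ℓ, mul_comm]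
    have := bregman_le_sub_of_isMaxOn (convex_stdSimplex ℝ A) ℓ
      (hΩdiff.differentiable one_ne_zero _) (fun p hp => by simpa [hℓ] using hmax s p hp)
      (hπstar s) (hπ s)
    simpa only [hℓ, gap, hVstar s] using this
  calc ∑ s, μ s * (Ω (π s) - Ω (πstar s) - fderiv ℝ Ω (πstar s) (π s - πstar s))
      ≤ ∑ s, μ s * gap s :=
        Finset.sum_le_sum fun s _ => mul_le_mul_of_nonneg_left (hD_le_gap s) (hμ_nonneg s)
    _ = (1 - γ) * ∑ s, ρ s * (Vstar s - Vπ s) :=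
        dotProduct_eq_of_discounted_fixedPoints hμ_fix hδ_fix

/-- Main inequality: in a finite regularized MDP with continuously differentiable
strictly convex regularizer `Ω` and optimal regularized policy `π⋆`, for any policy `π`,
`E_{s∼μ^π}[D_Ω(π(s,·), π⋆(s,·))] ≤ (1−γ)·E_{s∼ρ}[V_Ω^⋆(s) − V_Ω^π(s)]`. -/
theorem regularized_mdp_main_inequality
    {S A : Type*} [Fintype S] [Fintype A]
    (P : S → A → S → ℝ) (hP0 : ∀ s a s', 0 ≤ P s a s') (hP1 : ∀ s a, ∑ s', P s a s' = 1)
    (r : S → A → ℝ) (ρ : S → ℝ) (hρ : ρ ∈ stdSimplex ℝ S)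
    (γ : ℝ) (hγ0 : 0 ≤ γ) (hγ1 : γ < 1)
    (Ω : (A → ℝ) → ℝ) (hΩdiff : ContDiff ℝ 1 Ω)
    (hΩconv : StrictConvexOn ℝ (stdSimplex ℝ A) Ω)
    -- optimal regularized value functions and optimal policy
    (Qstar : S → A → ℝ) (Vstar : S → ℝ) (πstar : S → A → ℝ)
    (hπstar : ∀ s, πstar s ∈ stdSimplex ℝ A)
    (hQstar : ∀ s a, Qstar s a = r s a + γ * ∑ s', P s a s' * Vstar s')
    (hVstar : ∀ s, Vstar s = ∑ a, πstar s a * Qstar s a - Ω (πstar s))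
    (hmax : ∀ s, ∀ p ∈ stdSimplex ℝ A,
      ∑ a, p a * Qstar s a - Ω p ≤ ∑ a, πstar s a * Qstar s a - Ω (πstar s))
    -- an arbitrary policy `π` with its regularized value functions
    (π : S → A → ℝ) (hπ : ∀ s, π s ∈ stdSimplex ℝ A)
    (Qπ : S → A → ℝ) (Vπ : S → ℝ)
    (hQπ : ∀ s a, Qπ s a = r s a + γ * ∑ s', P s a s' * Vπ s')
    (hVπ : ∀ s, Vπ s = ∑ a, π s a * Qπ s a - Ω (π s))
    -- discounted stationary distribution of `π`
    (μ : S → ℝ)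
    (hμ : ∀ s', μ s' = (1 - γ) * ρ s' + γ * ∑ s, (∑ a, P s a s' * π s a) * μ s) :
    ∑ s, μ s * (Ω (π s) - Ω (πstar s) - fderiv ℝ Ω (πstar s) (π s - πstar s))
      ≤ (1 - γ) * ∑ s, ρ s * (Vstar s - Vπ s) :=
  regularized_mdp_main_inequality_general P hP0 hP1 r ρ hρ γ hγ0 hγ1 Ω hΩdiff Qstar Vstar πstar
    hπstar hQstar hVstar hmax π hπ Qπ Vπ hQπ hVπ μ hμ
end

section
/- Main equality: Under the same setting as the main inequality, if additionally the optimal regularized policy π*_Ω(s,·) lies in the relative interior of Δ(A) for every state s (all action probabilities strictly positive), then for any policy π: E_{s∼μ^π}[ D_Ω(π(s,·), π*_Ω(s,·)) ] = (1−γ)·E_{s∼ρ}[ V_Ω^⋆(s) − V_Ω^π(s) ]. -/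
/-!
Since `π⋆(s,·)` is an interior maximizer of `p ↦ ⟪p, Q⋆(s,·)⟫ - Ω p` on the simplex, every
direction `π(s,·) - π⋆(s,·)` can be followed both ways inside the simplex, so Fermat's rule gives
`DΩ(π⋆(s,·)) (π(s,·) - π⋆(s,·)) = ⟪π(s,·) - π⋆(s,·), Q⋆(s,·)⟫`. With the two Bellman equations this
turns the Bregman divergence at `s` into `δ s - γ (P^π δ) s` for `δ = V⋆ - V^π`, and the defining
equation `μ = (1 - γ) ρ + γ μ P^π` of the discounted occupancy makes its `μ`-average
`(1 - γ) ⟪ρ, δ⟫`.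
-/

open Filter Topology

section

variable {A : Type*} [Fintype A]

theorem eventually_add_smul_mem_stdSimplex {p v : A → ℝ} (hp : p ∈ stdSimplex ℝ A)
    (hpos : ∀ a, 0 < p a) (hv : ∑ a, v a = 0) :
    ∀ᶠ t in 𝓝 (0 : ℝ), p + t • v ∈ stdSimplex ℝ A := by
  have hcont : Continuous fun t : ℝ => p + t • v := by fun_prop
  have hpos_nhds : Set.univ.pi (fun _ => Set.Ioi 0) ∈ 𝓝 (p + (0 : ℝ) • v) :=
    (isOpen_set_pi Set.finite_univ fun _ _ => isOpen_Ioi).mem_nhds (by simpa using hpos)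
  filter_upwards [hcont.continuousAt.preimage_mem_nhds hpos_nhds] with t ht
  refine ⟨fun a => le_of_lt (ht a (Set.mem_univ a)), ?_⟩
  simp [Finset.sum_add_distrib, ← Finset.mul_sum, hp.2, hv]

theorem mem_posTangentConeAt_stdSimplex {p v : A → ℝ} (hp : p ∈ stdSimplex ℝ A)
    (hpos : ∀ a, 0 < p a) (hv : ∑ a, v a = 0) :
    v ∈ posTangentConeAt (stdSimplex ℝ A) p :=
  mem_posTangentConeAt_of_frequently_mem
    (eventually_nhdsWithin_of_eventually_nhds
      (eventually_add_smul_mem_stdSimplex hp hpos hv)).frequently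

theorem IsMaxOn.hasFDerivAt_stdSimplex_eq_zero {f : (A → ℝ) → ℝ} {f' : (A → ℝ) →L[ℝ] ℝ}
    {p v : A → ℝ} (hmax : IsMaxOn f (stdSimplex ℝ A) p) (hf : HasFDerivAt f f' p)
    (hp : p ∈ stdSimplex ℝ A) (hpos : ∀ a, 0 < p a) (hv : ∑ a, v a = 0) : f' v = 0 :=
  hmax.localize.hasFDerivWithinAt_eq_zero hf.hasFDerivWithinAt
    (mem_posTangentConeAt_stdSimplex hp hpos hv)
    (mem_posTangentConeAt_stdSimplex hp hpos (by simp [hv]))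

theorem hasFDerivAt_sum_mul_const (Q p : A → ℝ) :
    HasFDerivAt (fun x : A → ℝ => ∑ a, x a * Q a)
      (∑ a, Q a • ContinuousLinearMap.proj (R := ℝ) (φ := fun _ : A => ℝ) a) p := by
  convert (∑ a, Q a • ContinuousLinearMap.proj (R := ℝ) (φ := fun _ : A => ℝ) a).hasFDerivAt
    using 1
  ext x
  simp [mul_comm]

theorem fderiv_apply_sub_eq_of_isMaxOn_stdSimplex {Ω : (A → ℝ) → ℝ} {Q p q : A → ℝ}
    (hΩ : DifferentiableAt ℝ Ω p)
    (hmax : IsMaxOn (fun x => ∑ a, x a * Q a - Ω x) (stdSimplex ℝ A) p)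
    (hp : p ∈ stdSimplex ℝ A) (hpos : ∀ a, 0 < p a) (hq : q ∈ stdSimplex ℝ A) :
    fderiv ℝ Ω p (q - p) = ∑ a, (q a - p a) * Q a := by
  have hstat := hmax.hasFDerivAt_stdSimplex_eq_zero
    ((hasFDerivAt_sum_mul_const Q p).sub hΩ.hasFDerivAt) hp hpos
    (v := q - p) (by simp [Finset.sum_sub_distrib, hq.2, hp.2])
  simp only [sub_apply, sum_apply, smul_apply, ContinuousLinearMap.proj_apply, smul_eq_mul,
    Pi.sub_apply, sub_eq_zero] at hstat
  rw [← hstat]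
  exact Finset.sum_congr rfl fun a _ => mul_comm _ _

variable {S : Type*} [Fintype S]

theorem sum_mul_sub_eq_of_bellman {P : A → S → ℝ} {r Q Q' : A → ℝ} {V V' : S → ℝ} {γ : ℝ}
    (hQ : ∀ a, Q a = r a + γ * ∑ s', P a s' * V s')
    (hQ' : ∀ a, Q' a = r a + γ * ∑ s', P a s' * V' s') (w : A → ℝ) :
    ∑ a, w a * (Q a - Q' a) = γ * ∑ s', (∑ a, P a s' * w a) * (V s' - V' s') := by
  simp only [hQ, hQ', add_sub_add_left_eq_sub, ← mul_sub, ← Finset.sum_sub_distrib,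
    Finset.mul_sum, Finset.sum_mul]
  rw [Finset.sum_comm]
  exact Finset.sum_congr rfl fun _ _ => Finset.sum_congr rfl fun _ _ => by ring

theorem sum_mul_sub_discounted_transition_eq {M : S → S → ℝ} {μ ρ : S → ℝ} {γ : ℝ}
    (hμ : ∀ s', μ s' = (1 - γ) * ρ s' + γ * ∑ s, M s s' * μ s) (δ : S → ℝ) :
    ∑ s, μ s * (δ s - γ * ∑ s', M s s' * δ s') = (1 - γ) * ∑ s, ρ s * δ s := by
  have hswap : ∑ s, μ s * (γ * ∑ s', M s s' * δ s')
      = ∑ s', (γ * ∑ s, M s s' * μ s) * δ s' := by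
    simp only [Finset.mul_sum, Finset.sum_mul]
    rw [Finset.sum_comm]
    exact Finset.sum_congr rfl fun _ _ => Finset.sum_congr rfl fun _ _ => by ring
  calc ∑ s, μ s * (δ s - γ * ∑ s', M s s' * δ s')
      = ∑ s, μ s * δ s - ∑ s', (μ s' - (1 - γ) * ρ s') * δ s' := by
        simp only [mul_sub, Finset.sum_sub_distrib, hswap]
        congr 1
        exact Finset.sum_congr rfl fun s' _ => by rw [hμ s']; ring
    _ = (1 - γ) * ∑ s, ρ s * δ s := by
        rw [Finset.mul_sum, ← Finset.sum_sub_distrib]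
        exact Finset.sum_congr rfl fun _ _ => by ring

end

theorem regularized_mdp_main_equality_general
    {S A : Type*} [Fintype S] [Fintype A]
    (P : S → A → S → ℝ)
    (r : S → A → ℝ) (ρ : S → ℝ)
    (γ : ℝ)
    (Ω : (A → ℝ) → ℝ) (hΩdiff : ContDiff ℝ 1 Ω)
    -- optimal regularized value functions and optimal policy
    (Qstar : S → A → ℝ) (Vstar : S → ℝ) (πstar : S → A → ℝ)
    (hπstar : ∀ s, πstar s ∈ stdSimplex ℝ A)
    (hπstar_pos : ∀ s a, 0 < πstar s a)
    (hQstar : ∀ s a, Qstar s a = r s a + γ * ∑ s', P s a s' * Vstar s')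
    (hVstar : ∀ s, Vstar s = ∑ a, πstar s a * Qstar s a - Ω (πstar s))
    (hmax : ∀ s, ∀ p ∈ stdSimplex ℝ A,
      ∑ a, p a * Qstar s a - Ω p ≤ ∑ a, πstar s a * Qstar s a - Ω (πstar s))
    -- an arbitrary policy `π` with its regularized value functions
    (π : S → A → ℝ) (hπ : ∀ s, π s ∈ stdSimplex ℝ A)
    (Qπ : S → A → ℝ) (Vπ : S → ℝ)
    (hQπ : ∀ s a, Qπ s a = r s a + γ * ∑ s', P s a s' * Vπ s')
    (hVπ : ∀ s, Vπ s = ∑ a, π s a * Qπ s a - Ω (π s))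
    -- discounted stationary distribution of `π`
    (μ : S → ℝ)
    (hμ : ∀ s', μ s' = (1 - γ) * ρ s' + γ * ∑ s, (∑ a, P s a s' * π s a) * μ s) :
    ∑ s, μ s * (Ω (π s) - Ω (πstar s) - fderiv ℝ Ω (πstar s) (π s - πstar s))
      = (1 - γ) * ∑ s, ρ s * (Vstar s - Vπ s) := by
  have hbregman : ∀ s, Ω (π s) - Ω (πstar s) - fderiv ℝ Ω (πstar s) (π s - πstar s)
      = (Vstar s - Vπ s) - γ * ∑ s', (∑ a, P s a s' * π s a) * (Vstar s' - Vπ s') := by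
    intro s
    have hfoc := fderiv_apply_sub_eq_of_isMaxOn_stdSimplex
      ((hΩdiff.differentiable one_ne_zero) (πstar s)) (isMaxOn_iff.2 (hmax s))
      (hπstar s) (hπstar_pos s) (hπ s)
    rw [hfoc, ← sum_mul_sub_eq_of_bellman (hQstar s) (hQπ s) (π s), hVstar, hVπ]
    simp only [sub_mul, mul_sub, Finset.sum_sub_distrib]
    ring
  simp_rw [hbregman]
  exact sum_mul_sub_discounted_transition_eq hμ _

/-- Main equality: in a finite regularized MDP with continuously differentiable
strictly convex regularizer `Ω` and optimal regularized policy `π⋆`, for any policy `π`,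
if additionally `π⋆(s,·)` lies in the relative interior of the simplex for every `s`,
`E_{s∼μ^π}[D_Ω(π(s,·), π⋆(s,·))] = (1−γ)·E_{s∼ρ}[V_Ω^⋆(s) − V_Ω^π(s)]`. -/
theorem regularized_mdp_main_equality
    {S A : Type*} [Fintype S] [Fintype A]
    (P : S → A → S → ℝ) (hP0 : ∀ s a s', 0 ≤ P s a s') (hP1 : ∀ s a, ∑ s', P s a s' = 1)
    (r : S → A → ℝ) (ρ : S → ℝ) (hρ : ρ ∈ stdSimplex ℝ S)
    (γ : ℝ) (hγ0 : 0 ≤ γ) (hγ1 : γ < 1)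
    (Ω : (A → ℝ) → ℝ) (hΩdiff : ContDiff ℝ 1 Ω)
    (hΩconv : StrictConvexOn ℝ (stdSimplex ℝ A) Ω)
    -- optimal regularized value functions and optimal policy
    (Qstar : S → A → ℝ) (Vstar : S → ℝ) (πstar : S → A → ℝ)
    (hπstar : ∀ s, πstar s ∈ stdSimplex ℝ A)
    (hπstar_pos : ∀ s a, 0 < πstar s a)
    (hQstar : ∀ s a, Qstar s a = r s a + γ * ∑ s', P s a s' * Vstar s')
    (hVstar : ∀ s, Vstar s = ∑ a, πstar s a * Qstar s a - Ω (πstar s))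
    (hmax : ∀ s, ∀ p ∈ stdSimplex ℝ A,
      ∑ a, p a * Qstar s a - Ω p ≤ ∑ a, πstar s a * Qstar s a - Ω (πstar s))
    -- an arbitrary policy `π` with its regularized value functions
    (π : S → A → ℝ) (hπ : ∀ s, π s ∈ stdSimplex ℝ A)
    (Qπ : S → A → ℝ) (Vπ : S → ℝ)
    (hQπ : ∀ s a, Qπ s a = r s a + γ * ∑ s', P s a s' * Vπ s')
    (hVπ : ∀ s, Vπ s = ∑ a, π s a * Qπ s a - Ω (π s))
    -- discounted stationary distribution of `π`
    (μ : S → ℝ)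
    (hμ : ∀ s', μ s' = (1 - γ) * ρ s' + γ * ∑ s, (∑ a, P s a s' * π s a) * μ s) :
    ∑ s, μ s * (Ω (π s) - Ω (πstar s) - fderiv ℝ Ω (πstar s) (π s - πstar s))
      = (1 - γ) * ∑ s, ρ s * (Vstar s - Vπ s) :=
  regularized_mdp_main_equality_general P r ρ γ Ω hΩdiff Qstar Vstar πstar hπstar hπstar_pos hQstar
    hVstar hmax π hπ Qπ Vπ hQπ hVπ μ hμ
end

section
/- KL corollary: Let τ > 0 and take Ω = −τH where H is the Shannon entropy on Δ(A). Then for any policy π in a finite discounted MDP: E_{s∼μ^π}[ KL(π(s,·) ‖ π*_Ω(s,·)) ] = ((1−γ)/τ)·E_{s∼ρ}[ V_Ω^⋆(s) − V_Ω^π(s) ]. -/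
/-!
The entropy-regularized greedy step is the Gibbs variational principle: for `q = softmax (Q / τ)`,
`⟨p, Q⟩ + τ H(p) = τ log ∑ₐ exp (Q a / τ) - τ KL(p ‖ q)` on the simplex, so the maximizer is `q`
and the regularized objective of any `p` falls short of the optimum by exactly `τ KL(p ‖ π⋆)`.
Subtracting the Bellman equations of `π` and `π⋆` turns this per-state gap into
`(V⋆ - Vπ)(s) - γ (Pπ (V⋆ - Vπ))(s)`, and the defining equation of the discounted occupancy
`μ = (1 - γ) ρ + γ μ Pπ` telescopes its `μ`-average into `(1 - γ) ⟨ρ, V⋆ - Vπ⟩`.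
-/

open Finset InformationTheory

section KullbackLeibler

variable {A : Type*} [Fintype A] {p q : A → ℝ}

lemma sum_mul_log_div_eq_sum_mul_klFun (hq : ∀ a, 0 < q a) (hpq : ∑ a, p a = ∑ a, q a) :
    ∑ a, p a * Real.log (p a / q a) = ∑ a, q a * klFun (p a / q a) := by
  have hterm : ∀ a, q a * klFun (p a / q a) = p a * Real.log (p a / q a) + (q a - p a) := by
    intro a
    have := (hq a).ne'
    rw [klFun_apply]
    field_simp
    ring
  simp_rw [hterm, sum_add_distrib, sum_sub_distrib, hpq, sub_self, add_zero]

lemma sum_mul_log_div_nonneg (hp : ∀ a, 0 ≤ p a) (hq : ∀ a, 0 < q a)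
    (hpq : ∑ a, p a = ∑ a, q a) : 0 ≤ ∑ a, p a * Real.log (p a / q a) := by
  rw [sum_mul_log_div_eq_sum_mul_klFun hq hpq]
  exact sum_nonneg fun a _ => mul_nonneg (hq a).le (klFun_nonneg (div_nonneg (hp a) (hq a).le))

lemma eq_of_sum_mul_log_div_eq_zero (hp : ∀ a, 0 ≤ p a) (hq : ∀ a, 0 < q a)
    (hpq : ∑ a, p a = ∑ a, q a) (hkl : ∑ a, p a * Real.log (p a / q a) = 0) : p = q := by
  have hratio : ∀ a, 0 ≤ p a / q a := fun a => div_nonneg (hp a) (hq a).le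
  rw [sum_mul_log_div_eq_sum_mul_klFun hq hpq,
    sum_eq_zero_iff_of_nonneg fun a _ => mul_nonneg (hq a).le (klFun_nonneg (hratio a))] at hkl
  funext a
  have hzero := hkl a (mem_univ a)
  rwa [mul_eq_zero, or_iff_right (hq a).ne', klFun_eq_zero_iff (hratio a),
    div_eq_one_iff_eq (hq a).ne'] at hzero

end KullbackLeibler

section Softmax

variable {A : Type*} [Fintype A] (τ : ℝ) (Q : A → ℝ)

noncomputable def softmax (a : A) : ℝ := Real.exp (Q a / τ) / ∑ b, Real.exp (Q b / τ)

noncomputable def logPartition : ℝ := τ * Real.log (∑ b, Real.exp (Q b / τ))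

noncomputable def entropyRegObjective (p : A → ℝ) : ℝ :=
  ∑ a, p a * Q a - τ * ∑ a, p a * Real.log (p a)

variable {τ Q} [Nonempty A]

lemma sum_exp_div_pos : 0 < ∑ b, Real.exp (Q b / τ) :=
  sum_pos (fun _ _ => Real.exp_pos _) univ_nonempty

lemma softmax_pos (a : A) : 0 < softmax τ Q a := div_pos (Real.exp_pos _) sum_exp_div_pos

lemma sum_softmax : ∑ a, softmax τ Q a = 1 := by
  simp only [softmax, ← sum_div, div_self sum_exp_div_pos.ne']

lemma mul_log_softmax (hτ : τ ≠ 0) (a : A) :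
    τ * Real.log (softmax τ Q a) = Q a - logPartition τ Q := by
  rw [softmax, logPartition, Real.log_div (Real.exp_ne_zero _) sum_exp_div_pos.ne', Real.log_exp]
  field_simp

/-- Gibbs variational principle. -/
lemma entropyRegObjective_eq_logPartition_sub (hτ : τ ≠ 0) {p : A → ℝ} (hp : ∑ a, p a = 1) :
    entropyRegObjective τ Q p
      = logPartition τ Q - τ * ∑ a, p a * Real.log (p a / softmax τ Q a) := by
  have hterm : ∀ a, τ * (p a * Real.log (p a / softmax τ Q a))
      = τ * (p a * Real.log (p a)) - p a * Q a + p a * logPartition τ Q := by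
    intro a
    rcases eq_or_ne (p a) 0 with h | h
    · simp [h]
    · rw [Real.log_div h (softmax_pos a).ne']
      linear_combination (-p a) * mul_log_softmax (Q := Q) hτ a
  simp only [entropyRegObjective, mul_sum, hterm, sum_add_distrib, sum_sub_distrib, ← sum_mul,
    hp, one_mul]
  ring

lemma eq_softmax_of_isMaxOn (hτ : 0 < τ) {ps : A → ℝ} (hps : ps ∈ stdSimplex ℝ A)
    (hmax : IsMaxOn (entropyRegObjective τ Q) (stdSimplex ℝ A) ps) :
    ps = softmax τ Q := by
  have hsm : softmax τ Q ∈ stdSimplex ℝ A := ⟨fun a => (softmax_pos a).le, sum_softmax⟩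
  have hself : ∑ a, softmax τ Q a * Real.log (softmax τ Q a / softmax τ Q a) = 0 := by
    simp [div_self (softmax_pos _).ne']
  have hle := isMaxOn_iff.1 hmax _ hsm
  rw [entropyRegObjective_eq_logPartition_sub hτ.ne' sum_softmax, hself,
    entropyRegObjective_eq_logPartition_sub hτ.ne' hps.2] at hle
  have hkl : ∑ a, ps a * Real.log (ps a / softmax τ Q a) = 0 :=
    le_antisymm (nonpos_of_mul_nonpos_right (by linarith) hτ)
      (sum_mul_log_div_nonneg hps.1 softmax_pos (by rw [hps.2, sum_softmax]))
  exact eq_of_sum_mul_log_div_eq_zero hps.1 softmax_pos (by rw [hps.2, sum_softmax]) hkl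

end Softmax

lemma entropyRegObjective_eq_sub_of_isMaxOn {A : Type*} [Fintype A] {τ : ℝ} (hτ : 0 < τ)
    {Q ps p : A → ℝ} (hps : ps ∈ stdSimplex ℝ A)
    (hmax : IsMaxOn (entropyRegObjective τ Q) (stdSimplex ℝ A) ps)
    (hp : ∑ a, p a = 1) :
    entropyRegObjective τ Q p
      = entropyRegObjective τ Q ps - τ * ∑ a, p a * Real.log (p a / ps a) := by
  have : Nonempty A := univ_nonempty_iff.1 (nonempty_of_sum_ne_zero (hp ▸ one_ne_zero))
  obtain rfl := eq_softmax_of_isMaxOn hτ hps hmax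
  rw [entropyRegObjective_eq_logPartition_sub hτ.ne' hp,
    entropyRegObjective_eq_logPartition_sub hτ.ne' hps.2]
  simp [div_self (softmax_pos _).ne']

section DiscountedMDP

variable {S A : Type*} [Fintype S] [Fintype A]

lemma sum_mul_sub_discounted_eq_of_occupancy (K : S → S → ℝ) (ρ μ f : S → ℝ) (γ : ℝ)
    (hμ : ∀ s', μ s' = (1 - γ) * ρ s' + γ * ∑ s, K s s' * μ s) :
    ∑ s, μ s * (f s - γ * ∑ s', K s s' * f s') = (1 - γ) * ∑ s, ρ s * f s := by
  have hswap : γ * ∑ s, μ s * ∑ s', K s s' * f s' = ∑ s', (γ * ∑ s, K s s' * μ s) * f s' := by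
    simp only [mul_sum, sum_mul]
    rw [sum_comm]
    exact sum_congr rfl fun _ _ => sum_congr rfl fun _ _ => by ring
  calc ∑ s, μ s * (f s - γ * ∑ s', K s s' * f s')
      = ∑ s, μ s * f s - ∑ s', (γ * ∑ s, K s s' * μ s) * f s' := by
        rw [← hswap, mul_sum, ← sum_sub_distrib]
        exact sum_congr rfl fun _ _ => by ring
    _ = ∑ s, μ s * f s - ∑ s, (μ s - (1 - γ) * ρ s) * f s := by
        congr 1
        exact sum_congr rfl fun s _ => by rw [hμ s, add_sub_cancel_left]
    _ = (1 - γ) * ∑ s, ρ s * f s := by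
        rw [mul_sum, ← sum_sub_distrib]
        exact sum_congr rfl fun _ _ => by ring

lemma sum_mul_bellman_sub (P : S → A → S → ℝ) (r : S → A → ℝ) (γ : ℝ) (V W : S → ℝ)
    (p : A → ℝ) (s : S) :
    ∑ a, p a * (r s a + γ * ∑ s', P s a s' * V s') - ∑ a, p a * (r s a + γ * ∑ s', P s a s' * W s')
      = γ * ∑ s', (∑ a, P s a s' * p a) * (V s' - W s') := by
  have hterm : ∀ a, p a * (r s a + γ * ∑ s', P s a s' * V s')
      - p a * (r s a + γ * ∑ s', P s a s' * W s')
        = ∑ s', γ * (P s a s' * p a * (V s' - W s')) := by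
    intro a
    simp only [mul_add, mul_sub, mul_sum, sum_sub_distrib]
    ring_nf
  rw [← sum_sub_distrib, sum_congr rfl fun a _ => hterm a, sum_comm]
  simp only [mul_sum, sum_mul]

end DiscountedMDP

theorem entropy_regularized_kl_identity_general
    {S A : Type*} [Fintype S] [Fintype A]
    (P : S → A → S → ℝ)
    (r : S → A → ℝ) (ρ : S → ℝ)
    (γ : ℝ)
    (τ : ℝ) (hτ : 0 < τ)
    -- the regularizer Ω = −τH, i.e. Ω p = τ ∑ₐ p a log (p a)
    (Ω : (A → ℝ) → ℝ) (hΩ : ∀ p, Ω p = τ * ∑ a, p a * Real.log (p a))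
    -- optimal regularized value functions and optimal policy
    (Qstar : S → A → ℝ) (Vstar : S → ℝ) (πstar : S → A → ℝ)
    (hπstar : ∀ s, πstar s ∈ stdSimplex ℝ A)
    (hQstar : ∀ s a, Qstar s a = r s a + γ * ∑ s', P s a s' * Vstar s')
    (hVstar : ∀ s, Vstar s = ∑ a, πstar s a * Qstar s a - Ω (πstar s))
    (hmax : ∀ s, ∀ p ∈ stdSimplex ℝ A,
      ∑ a, p a * Qstar s a - Ω p ≤ ∑ a, πstar s a * Qstar s a - Ω (πstar s))
    -- an arbitrary policy `π` with its regularized value functions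
    (π : S → A → ℝ) (hπ : ∀ s, π s ∈ stdSimplex ℝ A)
    (Qπ : S → A → ℝ) (Vπ : S → ℝ)
    (hQπ : ∀ s a, Qπ s a = r s a + γ * ∑ s', P s a s' * Vπ s')
    (hVπ : ∀ s, Vπ s = ∑ a, π s a * Qπ s a - Ω (π s))
    -- discounted stationary distribution of `π`
    (μ : S → ℝ)
    (hμ : ∀ s', μ s' = (1 - γ) * ρ s' + γ * ∑ s, (∑ a, P s a s' * π s a) * μ s) :
    ∑ s, μ s * (∑ a, π s a * Real.log (π s a / πstar s a))
      = ((1 - γ) / τ) * ∑ s, ρ s * (Vstar s - Vπ s) := by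
  have hgap : ∀ s, τ * ∑ a, π s a * Real.log (π s a / πstar s a)
      = Vstar s - Vπ s - γ * ∑ s', (∑ a, P s a s' * π s a) * (Vstar s' - Vπ s') := by
    intro s
    have hopt := entropyRegObjective_eq_sub_of_isMaxOn hτ (hπstar s)
      (isMaxOn_iff.2 fun p hp => by simpa only [entropyRegObjective, hΩ] using hmax s p hp)
      (hπ s).2
    have hbellman := sum_mul_bellman_sub P r γ Vstar Vπ (π s) s
    simp only [← hQstar, ← hQπ] at hbellman
    rw [hVstar, hVπ, hΩ, hΩ]
    simp only [entropyRegObjective] at hopt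
    linarith
  rw [div_mul_eq_mul_div, eq_div_iff hτ.ne',
    ← sum_mul_sub_discounted_eq_of_occupancy _ ρ μ _ γ hμ, sum_mul]
  exact sum_congr rfl fun s _ => by rw [← hgap s]; ring

/-- KL corollary: with entropy regularizer `Ω = −τH` (`τ > 0`), for any policy `π`,
`E_{s∼μ^π}[KL(π(s,·) ‖ π⋆(s,·))] = ((1−γ)/τ)·E_{s∼ρ}[V_Ω^⋆(s) − V_Ω^π(s)]`. -/
theorem entropy_regularized_kl_identity
    {S A : Type*} [Fintype S] [Fintype A]
    (P : S → A → S → ℝ) (hP0 : ∀ s a s', 0 ≤ P s a s') (hP1 : ∀ s a, ∑ s', P s a s' = 1)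
    (r : S → A → ℝ) (ρ : S → ℝ) (hρ : ρ ∈ stdSimplex ℝ S)
    (γ : ℝ) (hγ0 : 0 ≤ γ) (hγ1 : γ < 1)
    (τ : ℝ) (hτ : 0 < τ)
    -- the regularizer Ω = −τH, i.e. Ω p = τ ∑ₐ p a log (p a)
    (Ω : (A → ℝ) → ℝ) (hΩ : ∀ p, Ω p = τ * ∑ a, p a * Real.log (p a))
    -- optimal regularized value functions and optimal policy
    (Qstar : S → A → ℝ) (Vstar : S → ℝ) (πstar : S → A → ℝ)
    (hπstar : ∀ s, πstar s ∈ stdSimplex ℝ A)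
    (hQstar : ∀ s a, Qstar s a = r s a + γ * ∑ s', P s a s' * Vstar s')
    (hVstar : ∀ s, Vstar s = ∑ a, πstar s a * Qstar s a - Ω (πstar s))
    (hmax : ∀ s, ∀ p ∈ stdSimplex ℝ A,
      ∑ a, p a * Qstar s a - Ω p ≤ ∑ a, πstar s a * Qstar s a - Ω (πstar s))
    -- an arbitrary policy `π` with its regularized value functions
    (π : S → A → ℝ) (hπ : ∀ s, π s ∈ stdSimplex ℝ A)
    (Qπ : S → A → ℝ) (Vπ : S → ℝ)
    (hQπ : ∀ s a, Qπ s a = r s a + γ * ∑ s', P s a s' * Vπ s')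
    (hVπ : ∀ s, Vπ s = ∑ a, π s a * Qπ s a - Ω (π s))
    -- discounted stationary distribution of `π`
    (μ : S → ℝ)
    (hμ : ∀ s', μ s' = (1 - γ) * ρ s' + γ * ∑ s, (∑ a, P s a s' * π s a) * μ s) :
    ∑ s, μ s * (∑ a, π s a * Real.log (π s a / πstar s a))
      = ((1 - γ) / τ) * ∑ s, ρ s * (Vstar s - Vπ s) :=
  entropy_regularized_kl_identity_general P r ρ γ τ hτ Ω hΩ Qstar Vstar πstar hπstar hQstar hVstar
    hmax π hπ Qπ Vπ hQπ hVπ μ hμ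
end

section
/- Unregularized performance difference lemma: For a finite discounted MDP and any two policies π, π': (1−γ)·E_{s∼ρ}[V^π(s) − V^{π'}(s)] = E_{s∼μ^π}[ ∑_a π(s,a)·A^{π'}(s,a) ], where A^{π'}(s,a) = Q^{π'}(s,a) − V^{π'}(s) is the advantage function. -/
/-- Unregularized performance difference lemma: for any two policies `π`, `π'`,
`(1−γ)·E_{s∼ρ}[V^π(s) − V^{π'}(s)] = E_{s∼μ^π}[∑ₐ π(s,a)·(Q^{π'}(s,a) − V^{π'}(s))]`. -/
theorem performance_difference
    {S A : Type*} [Fintype S] [Fintype A]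
    (P : S → A → S → ℝ) (hP0 : ∀ s a s', 0 ≤ P s a s') (hP1 : ∀ s a, ∑ s', P s a s' = 1)
    (r : S → A → ℝ) (ρ : S → ℝ) (hρ : ρ ∈ stdSimplex ℝ S)
    (γ : ℝ) (hγ0 : 0 ≤ γ) (hγ1 : γ < 1)
    (π π' : S → A → ℝ)
    (hπ : ∀ s, π s ∈ stdSimplex ℝ A) (hπ' : ∀ s, π' s ∈ stdSimplex ℝ A)
    (Qπ Qπ' : S → A → ℝ) (Vπ Vπ' : S → ℝ)
    (hQπ : ∀ s a, Qπ s a = r s a + γ * ∑ s', P s a s' * Vπ s')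
    (hVπ : ∀ s, Vπ s = ∑ a, π s a * Qπ s a)
    (hQπ' : ∀ s a, Qπ' s a = r s a + γ * ∑ s', P s a s' * Vπ' s')
    (hVπ' : ∀ s, Vπ' s = ∑ a, π' s a * Qπ' s a)
    (μ : S → ℝ)
    (hμ : ∀ s', μ s' = (1 - γ) * ρ s' + γ * ∑ s, (∑ a, P s a s' * π s a) * μ s) :
    (1 - γ) * ∑ s, ρ s * (Vπ s - Vπ' s)
      = ∑ s, μ s * ∑ a, π s a * (Qπ' s a - Vπ' s) := by
  have hπ1 : ∀ s, ∑ a, π s a = 1 := fun s => (hπ s).2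
  set g : S → ℝ := fun s => Vπ s - Vπ' s with hg
  have key : ∀ s, ∑ a, π s a * (Qπ' s a - Vπ' s)
      = g s - γ * ∑ s', (∑ a, π s a * P s a s') * g s' := by
    intro s
    have hQ : ∀ a, Qπ' s a = Qπ s a - γ * ∑ s', P s a s' * g s' := by
      intro a
      rw [hQπ, hQπ']
      simp only [hg, mul_sub, Finset.sum_sub_distrib, Finset.mul_sum]
      ring
    calc ∑ a, π s a * (Qπ' s a - Vπ' s)
        = (∑ a, π s a * Qπ' s a) - (∑ a, π s a) * Vπ' s := by
          rw [Finset.sum_mul, ← Finset.sum_sub_distrib]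
          exact Finset.sum_congr rfl fun a _ => by ring
      _ = (∑ a, (π s a * Qπ s a - γ * ∑ s', π s a * P s a s' * g s')) - Vπ' s := by
          rw [hπ1, one_mul]
          congr 1
          refine Finset.sum_congr rfl fun a _ => ?_
          rw [hQ a, mul_sub, Finset.mul_sum, Finset.mul_sum, Finset.mul_sum]
          congr 1
          exact Finset.sum_congr rfl fun s' _ => by ring
      _ = Vπ s - γ * (∑ a, ∑ s', π s a * P s a s' * g s') - Vπ' s := by
          rw [Finset.sum_sub_distrib, ← hVπ, ← Finset.mul_sum]
      _ = g s - γ * ∑ s', (∑ a, π s a * P s a s') * g s' := by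
          rw [Finset.sum_comm]
          simp only [hg, Finset.sum_mul]
          ring
  calc (1 - γ) * ∑ s, ρ s * g s
      = ∑ s', ((1 - γ) * ρ s') * g s' := by rw [Finset.mul_sum]; exact Finset.sum_congr rfl fun s _ => by ring
    _ = ∑ s', (μ s' - γ * ∑ s, (∑ a, P s a s' * π s a) * μ s) * g s' := by
        refine Finset.sum_congr rfl fun s' _ => ?_
        rw [hμ s']; ring
    _ = (∑ s', μ s' * g s') - γ * ∑ s', ∑ s, ((∑ a, P s a s' * π s a) * μ s) * g s' := by
        simp only [hg, sub_mul, mul_sub, Finset.sum_sub_distrib, Finset.sum_mul, Finset.mul_sum]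
        ring_nf
    _ = ∑ s, μ s * ∑ a, π s a * (Qπ' s a - Vπ' s) := by
        simp only [key]
        rw [Finset.sum_comm (f := fun s' s => ((∑ a, P s a s' * π s a) * μ s) * g s')]
        simp only [mul_sub, Finset.sum_sub_distrib, Finset.mul_sum]
        congr 1
        refine Finset.sum_congr rfl fun s _ => ?_
        refine Finset.sum_congr rfl fun s' _ => ?_
        have h : (∑ a, P s a s' * π s a) = ∑ a, π s a * P s a s' :=
          Finset.sum_congr rfl fun a _ => mul_comm _ _
        rw [h]; ring
end
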